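/- arXiv:1305.5768 — 4 statements merged into one kernel-verified Lean document; each statement's English description precedes it below -/
import Mathlib

section
/- Let n ≥ 1, let A be a real n×n matrix, and let A₁ be the (n−1)×(n−1) submatrix of A obtained by deleting the first row and first column. Write the characteristic polynomial of A as λⁿ + c₁λ^{n−1} + ⋯ + c_n and that of A₁ as λ^{n−1} + d₁λ^{n−2} + ⋯ + d_{n−1}. Suppose x : ℝ → ℝⁿ and u₁ : ℝ → ℝ are infinitely differentiable and satisfy x′(t) = A x(t) + u(t) for all t, where u(t) is the vector with first coordinate u₁(t) and all other coordinates 0. Let y = x₁ be the first coordinate of x. Then for all t ∈ ℝ: y^{(n)}(t) + Σ_{k=1}^{n} c_k·y^{(n−k)}(t) = u₁^{(n−1)}(t) + Σ_{k=1}^{n−1} d_k·u₁^{(n−1−k)}(t). -/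
open Polynomial Matrix Finset

noncomputable section StatementZeroAux

/-- The submodule of smooth real functions. -/
def smoothSub : Submodule ℝ (ℝ → ℝ) where
  carrier := {f | ContDiff ℝ (⊤ : ℕ∞) f}
  add_mem' := fun {a b} ha hb => by
    simp only [Set.mem_setOf_eq] at *
    exact ha.add hb
  zero_mem' := by
    simp only [Set.mem_setOf_eq]
    exact contDiff_const
  smul_mem' := fun c f hf => by
    simp only [Set.mem_setOf_eq] at *
    exact hf.const_smul c

lemma smoothSub_mem {f : ℝ → ℝ} : f ∈ smoothSub ↔ ContDiff ℝ (⊤ : ℕ∞) f := Iff.rfl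

lemma smoothSub_deriv_mem {f : ℝ → ℝ} (hf : ContDiff ℝ (⊤ : ℕ∞) f) : ContDiff ℝ (⊤ : ℕ∞) (deriv f) :=
  (contDiff_succ_iff_deriv.mp (hf.of_le (by rw [← WithTop.coe_one, ← WithTop.coe_add, top_add]))).2.2

lemma smoothSub_diffAt (f : smoothSub) (t : ℝ) : DifferentiableAt ℝ (f : ℝ → ℝ) t :=
  (((smoothSub_mem.mp f.2).differentiable (by simp))).differentiableAt

/-- Differentiation as a linear endomorphism of smooth functions. -/
def derivL : smoothSub →ₗ[ℝ] smoothSub where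
  toFun f := ⟨deriv (f : ℝ → ℝ), smoothSub_mem.mpr (smoothSub_deriv_mem (smoothSub_mem.mp f.2))⟩
  map_add' f g := Subtype.ext <| funext fun t => by
    have hf := smoothSub_diffAt f t
    have hg := smoothSub_diffAt g t
    simp only [Submodule.coe_add, Pi.add_apply]
    exact deriv_add hf hg
  map_smul' a f := Subtype.ext <| funext fun t => by
    have hf := smoothSub_diffAt f t
    simp only [SetLike.val_smul, Pi.smul_apply, RingHom.id_apply, smul_eq_mul]
    exact deriv_const_smul a hf

lemma derivL_pow_apply (k : ℕ) (f : smoothSub) :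
    (((derivL ^ k) f : smoothSub) : ℝ → ℝ) = iteratedDeriv k (f : ℝ → ℝ) := by
  induction k generalizing f with
  | zero => simp [iteratedDeriv_zero]
  | succ k ih =>
      have h1 : (derivL ^ (k + 1)) f = (derivL ^ k) (derivL f) := by
        rw [pow_succ, Module.End.mul_apply]
      rw [h1, ih, iteratedDeriv_succ']
      congr 1

lemma aeval_derivL_apply (p : ℝ[X]) (f : smoothSub) (t : ℝ) :
    (((Polynomial.aeval derivL p) f : smoothSub) : ℝ → ℝ) t
      = ∑ k ∈ Finset.range (p.natDegree + 1),
          p.coeff k * iteratedDeriv k (f : ℝ → ℝ) t := by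
  rw [Polynomial.aeval_eq_sum_range]
  rw [LinearMap.sum_apply]
  rw [Submodule.coe_sum]
  rw [Finset.sum_apply]
  refine Finset.sum_congr rfl fun k _ => ?_
  rw [LinearMap.smul_apply, SetLike.val_smul, Pi.smul_apply, derivL_pow_apply, smul_eq_mul]

/-- Rewriting the aeval-sum of a monic polynomial of known degree. -/
lemma monic_sum_eq (p : ℝ[X]) (m : ℕ) (hm : p.Monic) (hd : p.natDegree = m) (g : ℕ → ℝ) :
    ∑ k ∈ Finset.range (p.natDegree + 1), p.coeff k * g k
      = g m + ∑ k ∈ Finset.Icc 1 m, p.coeff (m - k) * g (m - k) := by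
  rw [hd, Finset.sum_range_succ]
  have hcm : p.coeff m = 1 := by
    have := hm.coeff_natDegree
    rwa [hd] at this
  rw [hcm, one_mul, add_comm]
  congr 1
  refine Finset.sum_bij' (fun k _ => m - k) (fun k _ => m - k) ?_ ?_ ?_ ?_ ?_
  · intro a ha
    simp only [Finset.mem_range] at ha
    simp only [Finset.mem_Icc]
    omega
  · intro a ha
    simp only [Finset.mem_Icc] at ha
    simp only [Finset.mem_range]
    omega
  · intro a ha
    simp only [Finset.mem_range] at ha
    show m - (m - a) = a
    omega
  · intro a ha
    simp only [Finset.mem_Icc] at ha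
    show m - (m - a) = a
    omega
  · intro a ha
    simp only [Finset.mem_range] at ha
    show p.coeff a * g a = p.coeff (m - (m - a)) * g (m - (m - a))
    rw [Nat.sub_sub_self (by omega : a ≤ m)]

end StatementZeroAux

/-- The input-output equation of the linear compartment model
`ẋ = A x + u`, `y = x₁`, with single input and output in the first compartment.
The matrix has size `n + 1` (so the size is an arbitrary integer `≥ 1`);
`c k` is the coefficient of `λ^(n+1-k)` in `charpoly A` and `d k` the coefficient
of `λ^(n-k)` in `charpoly A₁`, where `A₁` deletes the first row and column. -/
theorem statement0 (n : ℕ) (A : Matrix (Fin (n + 1)) (Fin (n + 1)) ℝ)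
    (x : Fin (n + 1) → ℝ → ℝ) (u₁ : ℝ → ℝ)
    (hx : ∀ i, ContDiff ℝ (⊤ : ℕ∞) (x i)) (hu : ContDiff ℝ (⊤ : ℕ∞) u₁)
    (hode : ∀ t : ℝ, ∀ i : Fin (n + 1),
      deriv (x i) t = (∑ j, A i j * x j t) + (if i = 0 then u₁ t else 0))
    (c : ℕ → ℝ) (hc : ∀ k, c k = (Matrix.charpoly A).coeff (n + 1 - k))
    (d : ℕ → ℝ)
    (hd : ∀ k, d k = (Matrix.charpoly (A.submatrix Fin.succ Fin.succ)).coeff (n - k)) :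
    ∀ t : ℝ,
      iteratedDeriv (n + 1) (x 0) t
          + ∑ k ∈ Finset.Icc 1 (n + 1), c k * iteratedDeriv (n + 1 - k) (x 0) t
        = iteratedDeriv n u₁ t + ∑ k ∈ Finset.Icc 1 n, d k * iteratedDeriv (n - k) u₁ t := by
  intro t
  let e : ℝ[X] → smoothSub →ₗ[ℝ] smoothSub := fun p => Polynomial.aeval derivL p
  let xi : Fin (n + 1) → smoothSub := fun i => ⟨x i, smoothSub_mem.mpr (hx i)⟩
  let uu : smoothSub := ⟨u₁, smoothSub_mem.mpr hu⟩
  set B := charmatrix A with hB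
  have he_mul : ∀ p q f, e (p * q) f = e p (e q f) := by
    intro p q f
    show Polynomial.aeval derivL (p * q) f = _
    rw [_root_.map_mul, Module.End.mul_apply]
  -- the ODE, in module form
  have step1 : ∀ i, ∑ j, e (B i j) (xi j) = if i = 0 then uu else 0 := by
    intro i
    have expand : ∀ j, e (B i j) (xi j)
        = (if i = j then derivL (xi j) else 0) - (A i j) • xi j := by
      intro j
      rw [hB]
      by_cases h : i = j
      · subst h
        rw [if_pos rfl, charmatrix_apply_eq]
        show Polynomial.aeval derivL (X - C (A i i)) (xi i) = _
        rw [map_sub, LinearMap.sub_apply, Polynomial.aeval_X, Polynomial.aeval_C,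
          Module.algebraMap_end_apply]
      · rw [if_neg h, charmatrix_apply_ne _ _ _ h]
        show Polynomial.aeval derivL (-C (A i j)) (xi j) = _
        rw [map_neg, LinearMap.neg_apply, Polynomial.aeval_C, Module.algebraMap_end_apply,
          zero_sub]
    rw [Finset.sum_congr rfl fun j _ => expand j, Finset.sum_sub_distrib,
      Finset.sum_ite_eq (Finset.univ) i (fun j => derivL (xi j)), if_pos (Finset.mem_univ i)]
    have hXv : derivL (xi i) = (∑ j, (A i j) • xi j) + (if i = 0 then uu else 0) := by
      apply Subtype.ext
      funext s
      have hodes := hode s i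
      show deriv (x i) s = _
      rw [hodes, Submodule.coe_add, Submodule.coe_sum, Pi.add_apply, Finset.sum_apply]
      congr 1
      all_goals first
        | exact Finset.sum_congr rfl fun j _ => rfl
        | (by_cases h : i = 0 <;> simp [h, uu])
    rw [hXv]
    abel
  -- multiply by the adjugate
  have step2 : e (Matrix.charpoly A) (xi 0) = e (B.adjugate 0 0) uu := by
    have lhs : e (Matrix.charpoly A) (xi 0) = ∑ l, e ((B.adjugate * B) 0 l) (xi l) := by
      rw [Finset.sum_congr rfl fun l _ => by rw [Matrix.adjugate_mul]]
      rw [Finset.sum_congr rfl fun l _ => by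
        rw [show ((B.det • (1 : Matrix (Fin (n+1)) (Fin (n+1)) ℝ[X])) 0 l) =
            (if (0 : Fin (n+1)) = l then B.det else 0) from by
          rw [Matrix.smul_apply, smul_eq_mul, Matrix.one_apply]
          split <;> simp]]
      rw [Finset.sum_congr rfl fun l _ => show e (if (0 : Fin (n+1)) = l then B.det else 0) (xi l)
          = (if (0 : Fin (n+1)) = l then e B.det (xi l) else 0) from by
        split
        · rfl
        · show Polynomial.aeval derivL (0 : ℝ[X]) (xi l) = 0
          rw [map_zero]
          rfl]
      rw [Finset.sum_ite_eq (Finset.univ) (0 : Fin (n + 1)) (fun l => e B.det (xi l)),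
        if_pos (Finset.mem_univ _), Matrix.charpoly, hB]
    rw [lhs]
    have h2 : ∀ l, e ((B.adjugate * B) 0 l) (xi l) = ∑ j, e (B.adjugate 0 j) (e (B j l) (xi l)) := by
      intro l
      rw [Matrix.mul_apply]
      rw [show Polynomial.aeval derivL (∑ j, B.adjugate 0 j * B j l) (xi l)
          = ∑ j, Polynomial.aeval derivL (B.adjugate 0 j * B j l) (xi l) from by
        rw [map_sum, LinearMap.sum_apply]]
      exact Finset.sum_congr rfl fun j _ => he_mul _ _ _
    rw [Finset.sum_congr rfl fun l _ => h2 l, Finset.sum_comm]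
    have h3 : ∀ j, (∑ l, e (B.adjugate 0 j) (e (B j l) (xi l)))
        = e (B.adjugate 0 j) (if j = 0 then uu else 0) := by
      intro j
      rw [← step1 j, map_sum]
    rw [Finset.sum_congr rfl fun j _ => h3 j]
    rw [Finset.sum_congr rfl fun j _ => show e (B.adjugate 0 j) (if j = 0 then uu else 0)
        = (if j = 0 then e (B.adjugate 0 j) uu else 0) from by
      split
      · rfl
      · exact map_zero _]
    rw [Finset.sum_ite_eq' Finset.univ (0 : Fin (n + 1)) (fun j => e (B.adjugate 0 j) uu),
      if_pos (Finset.mem_univ _)]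
  -- identify the adjugate entry with charpoly of the submatrix
  have step3 : B.adjugate 0 0 = Matrix.charpoly (A.submatrix Fin.succ Fin.succ) := by
    rw [Matrix.adjugate_apply, Matrix.det_succ_row_zero]
    have h4 : ∀ j : Fin (n + 1), (-1 : ℝ[X]) ^ (j : ℕ) * (B.updateRow 0 (Pi.single 0 1)) 0 j *
          ((B.updateRow 0 (Pi.single 0 1)).submatrix Fin.succ j.succAbove).det
        = if j = 0 then ((B.updateRow 0 (Pi.single 0 1)).submatrix Fin.succ j.succAbove).det
          else 0 := by
      intro j
      rw [Matrix.updateRow_self]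
      by_cases h : j = 0
      · subst h; simp
      · rw [if_neg h, Pi.single_apply, if_neg h]
        ring
    rw [Finset.sum_congr rfl fun j _ => h4 j,
      Finset.sum_ite_eq' Finset.univ (0 : Fin (n + 1)), if_pos (Finset.mem_univ _)]
    have hsub : B.submatrix Fin.succ Fin.succ = charmatrix (A.submatrix Fin.succ Fin.succ) := by
      rw [hB]
      ext i j
      by_cases h : i = j
      · subst h
        rw [Matrix.submatrix_apply, charmatrix_apply_eq, charmatrix_apply_eq,
          Matrix.submatrix_apply]
      · rw [Matrix.submatrix_apply,
          charmatrix_apply_ne _ _ _ (fun hh => h (Fin.succ_injective _ hh)),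
          charmatrix_apply_ne _ _ _ h, Matrix.submatrix_apply]
    rw [show (Fin.succ : Fin n → Fin (n + 1)) = Fin.succAbove 0 from Fin.succAbove_zero.symm,
      Matrix.submatrix_updateRow_succAbove,
      show (Fin.succAbove (0 : Fin (n + 1))) = Fin.succ from Fin.succAbove_zero]
    rw [hsub, Matrix.charpoly]
  rw [step3] at step2
  -- translate back to functions
  have keyt := congrArg (fun f : smoothSub => (f : ℝ → ℝ) t) step2
  simp only [e] at keyt
  rw [aeval_derivL_apply, aeval_derivL_apply] at keyt
  have hmonA : (Matrix.charpoly A).Monic := Matrix.charpoly_monic A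
  have hdegA : (Matrix.charpoly A).natDegree = n + 1 := by
    rw [Matrix.charpoly_natDegree_eq_dim, Fintype.card_fin]
  have hmonA1 : (Matrix.charpoly (A.submatrix Fin.succ Fin.succ)).Monic :=
    Matrix.charpoly_monic _
  have hdegA1 : (Matrix.charpoly (A.submatrix Fin.succ Fin.succ)).natDegree = n := by
    rw [Matrix.charpoly_natDegree_eq_dim, Fintype.card_fin]
  rw [monic_sum_eq _ _ hmonA hdegA, monic_sum_eq _ _ hmonA1 hdegA1] at keyt
  convert keyt using 2
  · exact Finset.sum_congr rfl fun k _ => by rw [hc k]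
  · exact Finset.sum_congr rfl fun k _ => by rw [hd k]
end

section
/- Let G be a finite directed graph on vertex set {1,…,n} with m edges. Then the transcendence degree over K of the subfield of Frac(R) generated by c₁,…,c_n,d₁,…,d_{n−1} is at most the transcendence degree over K of the subfield generated by the monomial cycles a^C, as C ranges over all cycles of G; in particular, the dimension of the image of the double characteristic polynomial map is bounded above by the maximal number of algebraically independent monomial cycles of G. -/
/-- Transcendence degree of `L` over `K`: the supremum of cardinalities of
algebraically independent subsets of `L`. -/
noncomputable def trdeg (K L : Type*) [CommRing K] [CommRing L] [Algebra K L] : Cardinal :=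
  ⨆ s : {s : Set L // AlgebraicIndependent K ((↑) : s → L)}, Cardinal.mk s.1

/-- The cyclic successor of an index in a list. -/
def nextIdx {α : Type*} (l : List α) (i : Fin l.length) : Fin l.length :=
  ⟨((i : ℕ) + 1) % l.length, Nat.mod_lt _ i.pos⟩

/-- A cycle of the directed graph with edge set `E`: a nonempty list of pairwise
distinct vertices such that, if it has more than one vertex, consecutive vertices
(cyclically) are joined by edges.  One-element lists are the cycles of length 1. -/
def IsCycle {n : ℕ} (E : Finset (Fin n × Fin n)) (l : List (Fin n)) : Prop :=
  l ≠ [] ∧ l.Nodup ∧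
    (1 < l.length → ∀ i : Fin l.length, (l.get i, l.get (nextIdx l i)) ∈ E)

/-- The compartment matrix `A(G)`. -/
noncomputable def compMatrix (K : Type) [Field K] (n : ℕ) (E : Finset (Fin n × Fin n)) :
    Matrix (Fin n) (Fin n)
      (MvPolynomial {p : Fin n × Fin n // p.1 = p.2 ∨ (p.2, p.1) ∈ E} K) :=
  Matrix.of fun i j => if h : i = j ∨ (j, i) ∈ E then MvPolynomial.X ⟨(i, j), h⟩ else 0

/-- The monomial cycle `a^C`. -/
noncomputable def cycleMonomial (K : Type) [Field K] (n : ℕ) (E : Finset (Fin n × Fin n))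
    (l : List (Fin n)) :
    MvPolynomial {p : Fin n × Fin n // p.1 = p.2 ∨ (p.2, p.1) ∈ E} K :=
  ∏ i : Fin l.length, compMatrix K n E (l.get (nextIdx l i)) (l.get i)

section Core
variable {K : Type} [Field K] {n : ℕ} {E : Finset (Fin n × Fin n)}

open Function Finset

/-- Core lemma: products along a permutation (pushed through an injection) lie in the
subalgebra generated by cycle monomials. -/
lemma prod_perm_mem (S : Subalgebra K (MvPolynomial {p : Fin n × Fin n // p.1 = p.2 ∨ (p.2, p.1) ∈ E} K))
    (hS : ∀ l : List (Fin n), IsCycle E l → cycleMonomial K n E l ∈ S)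
    {k : ℕ} (f : Fin k → Fin n) (hf : Function.Injective f) :
    ∀ (N : ℕ) (σ : Equiv.Perm (Fin k)) (s : Finset (Fin k)), s.card ≤ N →
      (∀ i ∈ s, σ i ∈ s) →
      (∏ i ∈ s, compMatrix K n E (f (σ i)) (f i)) ∈ S := by
  intro N
  induction N with
  | zero =>
    intro σ s hcard _
    have : s = ∅ := Finset.card_eq_zero.mp (Nat.le_zero.mp hcard)
    rw [this, Finset.prod_empty]; exact S.one_mem
  | succ N ih =>
    intro σ s hcard hs
    rcases s.eq_empty_or_nonempty with rfl | ⟨x, hx⟩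
    · rw [Finset.prod_empty]; exact S.one_mem
    -- the orbit of x
    have hper : x ∈ periodicPts σ := by
      refine ⟨orderOf σ, orderOf_pos σ, ?_⟩
      show σ^[orderOf σ] x = x
      rw [Equiv.Perm.iterate_eq_pow, pow_orderOf_eq_one]; rfl
    set t := minimalPeriod σ x with ht
    have htpos : 0 < t := minimalPeriod_pos_of_mem_periodicPts hper
    have hiter : σ^[t] x = x := isPeriodicPt_minimalPeriod σ x
    have hmod : ∀ m : ℕ, σ^[m % t] x = σ^[m] x := fun m =>
      iterate_mod_minimalPeriod_eq
    have hinj : Set.InjOn (fun m => σ^[m] x) (Set.Iio t) :=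
      iterate_injOn_Iio_minimalPeriod
    -- the orbit as a list of vertices
    set l : List (Fin n) := (List.range t).map (fun m => f (σ^[m] x)) with hl
    have hlen : l.length = t := by simp [hl]
    have hget : ∀ i : Fin l.length, l.get i = f (σ^[(i : ℕ)] x) := by
      intro i; simp [hl]
    have hnd : l.Nodup := by
      rw [List.nodup_iff_injective_get]
      intro i j hij
      rw [hget, hget] at hij
      have := hinj (by simpa [hlen] using i.2) (by simpa [hlen] using j.2) (hf hij)
      exact Fin.ext this
    have hne : l ≠ [] := by
      intro h; rw [h] at hlen; simp at hlen; omega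
    -- orbit in the index type
    set T : Finset (Fin k) := (Finset.range t).image (fun m => σ^[m] x) with hT
    have hTs : T ⊆ s := by
      intro y hy
      rw [hT, Finset.mem_image] at hy
      obtain ⟨m, -, rfl⟩ := hy
      induction m with
      | zero => exact hx
      | succ m ihm => rw [Function.iterate_succ_apply']; exact hs _ ihm
    have hxT : x ∈ T := by
      rw [hT, Finset.mem_image]; exact ⟨0, Finset.mem_range.mpr htpos, rfl⟩
    have hTmem : ∀ y, y ∈ T ↔ ∃ m < t, σ^[m] x = y := by
      intro y; rw [hT, Finset.mem_image]; simp
    -- σ maps s \ T into s \ T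
    have hsdiff : ∀ i ∈ s \ T, σ i ∈ s \ T := by
      intro i hi
      rw [Finset.mem_sdiff] at hi ⊢
      refine ⟨hs _ hi.1, fun hmem => hi.2 ?_⟩
      rw [hTmem] at hmem
      obtain ⟨m, hm, hmx⟩ := hmem
      rcases Nat.eq_zero_or_pos m with rfl | hmpos
      · -- σ i = x = σ^[t] x
        rw [hTmem]
        refine ⟨t - 1, by omega, ?_⟩
        apply σ.injective
        show σ (σ^[t-1] x) = σ i
        rw [← Function.iterate_succ_apply' σ]
        show (⇑σ)^[t - 1 + 1] x = σ i
        rw [show t - 1 + 1 = t by omega, hiter]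
        exact hmx
      · rw [hTmem]
        refine ⟨m - 1, by omega, ?_⟩
        apply σ.injective
        show σ (σ^[m-1] x) = σ i
        rw [← Function.iterate_succ_apply' σ]
        show (⇑σ)^[m - 1 + 1] x = σ i
        rw [show m - 1 + 1 = m by omega]
        exact hmx
    -- split the product
    have hsplit := Finset.prod_sdiff (f := fun i => compMatrix K n E (f (σ i)) (f i)) hTs
    -- product over T equals the cycle monomial of l
    have hprodT : (∏ i ∈ T, compMatrix K n E (f (σ i)) (f i)) = cycleMonomial K n E l := by
      rw [hT, Finset.prod_image (fun a ha b hb hab =>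
        hinj (by simpa using ha) (by simpa using hb) hab)]
      have hF : cycleMonomial K n E l
          = ∏ m ∈ Finset.range t,
              compMatrix K n E (f (σ^[(m+1) % l.length] x)) (f (σ^[m] x)) := by
        rw [cycleMonomial, ← hlen, ← Fin.prod_univ_eq_prod_range]
        refine Finset.prod_congr rfl fun i _ => ?_
        rw [hget i, hget (nextIdx l i)]
        rfl
      rw [hF]
      refine Finset.prod_congr rfl fun m hm => ?_
      rw [hlen, hmod (m+1), Function.iterate_succ_apply' σ]
    have hcard' : (s \ T).card ≤ N := by
      have h1 := Finset.card_sdiff_of_subset hTs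
      have h2 : 0 < T.card := Finset.card_pos.mpr ⟨x, hxT⟩
      have h3 := Finset.card_le_card hTs
      omega
    rw [← hsplit, hprodT]
    by_cases hcyc : IsCycle E l
    · exact S.mul_mem (ih σ (s \ T) hcard' hsdiff) (hS l hcyc)
    · have hzero : cycleMonomial K n E l = 0 := by
        rw [IsCycle] at hcyc
        push_neg at hcyc
        obtain ⟨hlong, i, hi⟩ := hcyc hne hnd
        refine Finset.prod_eq_zero (Finset.mem_univ i) ?_
        have hne' : l.get (nextIdx l i) ≠ l.get i := by
          intro heq
          have hinj' := List.nodup_iff_injective_get.mp hnd heq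
          have hv : ((i : ℕ) + 1) % l.length = (i : ℕ) := congrArg Fin.val hinj'
          rcases Nat.lt_or_ge ((i : ℕ) + 1) l.length with h | h
          · rw [Nat.mod_eq_of_lt h] at hv; omega
          · have hip : (i : ℕ) < l.length := i.2
            have he : (i : ℕ) + 1 = l.length := by omega
            rw [he, Nat.mod_self] at hv
            omega
        show compMatrix K n E (l.get (nextIdx l i)) (l.get i) = 0
        rw [compMatrix, Matrix.of_apply, dif_neg]
        push_neg
        exact ⟨hne', hi⟩
      rw [hzero, mul_zero]
      exact S.zero_mem
end Core

section Coeff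
variable {K : Type} [Field K] {n : ℕ} {E : Finset (Fin n × Fin n)}
open Polynomial Finset

lemma coeff_mul_mem {R : Type*} [CommRing R] {A : Type*} [CommRing A] [Algebra R A]
    (S : Subalgebra R A) {P Q : A[X]} (hP : ∀ j, P.coeff j ∈ S) (hQ : ∀ j, Q.coeff j ∈ S)
    (j : ℕ) : (P * Q).coeff j ∈ S := by
  rw [Polynomial.coeff_mul]
  exact S.sum_mem fun x _ => S.mul_mem (hP x.1) (hQ x.2)

lemma coeff_prod_X_sub_C_mem {R : Type*} [CommRing R] {A : Type*} [CommRing A] [Algebra R A]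
    (S : Subalgebra R A) {ι : Type*} [DecidableEq ι] (F : Finset ι) (a : ι → A)
    (ha : ∀ i ∈ F, a i ∈ S) (j : ℕ) : (∏ i ∈ F, (X - C (a i))).coeff j ∈ S := by
  induction F using Finset.induction generalizing j with
  | empty =>
    rw [Finset.prod_empty, Polynomial.coeff_one]
    split_ifs
    · exact S.one_mem
    · exact S.zero_mem
  | @insert i F hi ih =>
    rw [Finset.prod_insert hi]
    refine coeff_mul_mem S (fun m => ?_) (fun m => ih (fun i hi => ha i (Finset.mem_insert_of_mem hi)) m) j
    rw [Polynomial.coeff_sub]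
    rcases Nat.eq_zero_or_pos m with rfl | hm
    · rw [Polynomial.coeff_X_zero, Polynomial.coeff_C_zero]
      exact S.sub_mem S.zero_mem (ha i (Finset.mem_insert_self i F))
    · rw [Polynomial.coeff_C, if_neg (by omega)]
      by_cases h1 : m = 1
      · subst h1; rw [Polynomial.coeff_X_one]; exact S.sub_mem S.one_mem S.zero_mem
      · rw [Polynomial.coeff_X, if_neg (Ne.symm h1)]; exact S.sub_mem S.zero_mem S.zero_mem

lemma diag_mem (S : Subalgebra K (MvPolynomial {p : Fin n × Fin n // p.1 = p.2 ∨ (p.2, p.1) ∈ E} K))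
    (hS : ∀ l : List (Fin n), IsCycle E l → cycleMonomial K n E l ∈ S) (v : Fin n) :
    compMatrix K n E v v ∈ S := by
  have hc : IsCycle E [v] := ⟨List.cons_ne_nil _ _, List.nodup_singleton v, by simp⟩
  have := hS [v] hc
  rw [cycleMonomial] at this
  simpa [nextIdx] using this

lemma charpoly_coeff_mem
    (S : Subalgebra K (MvPolynomial {p : Fin n × Fin n // p.1 = p.2 ∨ (p.2, p.1) ∈ E} K))
    (hS : ∀ l : List (Fin n), IsCycle E l → cycleMonomial K n E l ∈ S)
    {k : ℕ} (f : Fin k → Fin n) (hf : Function.Injective f) (j : ℕ) :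
    (((compMatrix K n E).submatrix f f).charpoly).coeff j ∈ S := by
  classical
  set M := (compMatrix K n E).submatrix f f with hM
  rw [Matrix.charpoly, Matrix.det_apply, Polynomial.finset_sum_coeff]
  refine S.sum_mem fun σ _ => ?_
  rw [Polynomial.coeff_smul, Units.smul_def]
  refine zsmul_mem ?_ _
  have hsplit : (∏ i : Fin k, Matrix.charmatrix M (σ i) i)
      = C (∏ i ∈ σ.support, (-(M (σ i) i))) * ∏ i ∈ σ.supportᶜ, (X - C (M i i)) := by
    rw [map_prod, ← Finset.prod_mul_prod_compl σ.support]
    congr 1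
    · refine Finset.prod_congr rfl fun i hi => ?_
      rw [Matrix.charmatrix_apply_ne _ _ _ (Equiv.Perm.mem_support.mp hi), map_neg]
    · refine Finset.prod_congr rfl fun i hi => ?_
      rw [Finset.mem_compl, Equiv.Perm.notMem_support] at hi
      rw [hi, Matrix.charmatrix_apply_eq]
  rw [hsplit, Polynomial.coeff_C_mul]
  refine S.mul_mem ?_ (coeff_prod_X_sub_C_mem S _ _ (fun i _ => by
    rw [hM, Matrix.submatrix_apply]; exact diag_mem S hS (f i)) j)
  have hneg : (∏ i ∈ σ.support, (-(M (σ i) i)))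
      = (-1 : _) ^ σ.support.card * ∏ i ∈ σ.support, M (σ i) i := by
    rw [← Finset.prod_const, ← Finset.prod_mul_distrib]
    exact Finset.prod_congr rfl fun i _ => (neg_one_mul _).symm
  rw [hneg]
  refine S.mul_mem (pow_mem (S.neg_mem S.one_mem) _) ?_
  have : (∏ i ∈ σ.support, M (σ i) i)
      = ∏ i ∈ σ.support, compMatrix K n E (f (σ i)) (f i) :=
    Finset.prod_congr rfl fun i _ => by rw [hM, Matrix.submatrix_apply]
  rw [this]
  exact prod_perm_mem S hS f hf σ.support.card σ σ.support le_rfl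
    (fun i hi => Equiv.Perm.apply_mem_support.mpr hi)

end Coeff

lemma trdeg_mono {K L : Type*} [Field K] [Field L] [Algebra K L]
    {F1 F2 : IntermediateField K L} (h : F1 ≤ F2) : trdeg K F1 ≤ trdeg K F2 := by
  have hinj : Function.Injective (IntermediateField.inclusion h) :=
    fun a b hab => by
      apply Subtype.ext
      have := congrArg Subtype.val hab
      exact this
  refine ciSup_le' fun s => ?_
  have hi : AlgebraicIndependent K
      ((↑) : ((IntermediateField.inclusion h) '' s.1) → F2) := by
    have h2 : AlgebraicIndependent K
        (fun x : s.1 => (id ((IntermediateField.inclusion h) (x : F1)) : F2)) :=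
      s.2.map' hinj
    exact AlgebraicIndependent.image_of_comp s.1 (IntermediateField.inclusion h) id h2
  have hb : BddAbove (Set.range fun t : {t : Set F2 // AlgebraicIndependent K ((↑) : t → F2)}
      => Cardinal.mk t.1) := by
    refine ⟨Cardinal.mk F2, ?_⟩
    rintro c ⟨t, rfl⟩
    exact Cardinal.mk_set_le t.1
  refine le_ciSup_of_le hb ⟨_, hi⟩ ?_
  exact le_of_eq (Cardinal.mk_image_eq hinj).symm


/-- For a directed graph `G` on `n + 1` vertices, the transcendence degree
over `K` of the subfield of `Frac(R)` generated by the coefficients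
`c₁, …, c_{n+1}, d₁, …, d_n` of the two characteristic polynomials is at most the
transcendence degree of the subfield generated by the monomial cycles of `G`. -/
theorem statement5 (K : Type) [Field K] [CharZero K] (n : ℕ)
    (E : Finset (Fin (n + 1) × Fin (n + 1))) (hloop : ∀ e ∈ E, e.1 ≠ e.2) :
    trdeg K (IntermediateField.adjoin K
      ((algebraMap
          (MvPolynomial {p : Fin (n + 1) × Fin (n + 1) // p.1 = p.2 ∨ (p.2, p.1) ∈ E} K)
          (FractionRing
            (MvPolynomial {p : Fin (n + 1) × Fin (n + 1) // p.1 = p.2 ∨ (p.2, p.1) ∈ E} K))) ''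
        ({x | ∃ j < n + 1, x = (Matrix.charpoly (compMatrix K (n + 1) E)).coeff j} ∪
         {x | ∃ j < n, x =
            (Matrix.charpoly ((compMatrix K (n + 1) E).submatrix Fin.succ Fin.succ)).coeff j})))
      ≤ trdeg K (IntermediateField.adjoin K
      ((algebraMap
          (MvPolynomial {p : Fin (n + 1) × Fin (n + 1) // p.1 = p.2 ∨ (p.2, p.1) ∈ E} K)
          (FractionRing
            (MvPolynomial {p : Fin (n + 1) × Fin (n + 1) // p.1 = p.2 ∨ (p.2, p.1) ∈ E} K))) ''
        {x | ∃ l : List (Fin (n + 1)), IsCycle E l ∧ x = cycleMonomial K (n + 1) E l})) := by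
  set R := MvPolynomial {p : Fin (n + 1) × Fin (n + 1) // p.1 = p.2 ∨ (p.2, p.1) ∈ E} K with hR
  set L := FractionRing R with hL
  set cycSet : Set R :=
    {x | ∃ l : List (Fin (n + 1)), IsCycle E l ∧ x = cycleMonomial K (n + 1) E l} with hcyc
  set S : Subalgebra K R := Algebra.adjoin K cycSet with hSdef
  have hS : ∀ l : List (Fin (n + 1)), IsCycle E l → cycleMonomial K (n + 1) E l ∈ S :=
    fun l hl => Algebra.subset_adjoin ⟨l, hl, rfl⟩
  apply trdeg_mono
  rw [IntermediateField.adjoin_le_iff]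
  rintro y ⟨p, hp, rfl⟩
  have hpS : p ∈ S := by
    rcases hp with ⟨j, hj, rfl⟩ | ⟨j, hj, rfl⟩
    · have := charpoly_coeff_mem S hS (id : Fin (n+1) → Fin (n+1)) Function.injective_id j
      rwa [Matrix.submatrix_id_id] at this
    · exact charpoly_coeff_mem S hS (Fin.succ : Fin n → Fin (n+1)) (Fin.succ_injective n) j
  have hmap : (algebraMap R L) p ∈ Algebra.adjoin K ((algebraMap R L) '' cycSet) := by
    have h1 : (algebraMap R L) p ∈ (Algebra.adjoin K cycSet).map (IsScalarTower.toAlgHom K R L) :=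
      ⟨p, hpS, rfl⟩
    rwa [AlgHom.map_adjoin] at h1
  exact IntermediateField.algebra_adjoin_le_adjoin K _ hmap
end

section
/- If G is an inductively strongly connected finite directed graph with n vertices, then G has at least 2n − 2 edges. -/
/-- The induced subgraph of the digraph with edge set `E` on the vertex set `S` is
strongly connected. -/
def InducedSC {n : ℕ} (E : Finset (Fin n × Fin n)) (S : Finset (Fin n)) : Prop :=
  ∀ u ∈ S, ∀ v ∈ S,
    Relation.ReflTransGen (fun a b => (a, b) ∈ E ∧ a ∈ S ∧ b ∈ S) u v

/-- An inductively strongly connected digraph on `n + 1` vertices (there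
is an ordering of the vertices starting at the distinguished vertex `0` all of whose
initial segments induce strongly connected subgraphs) has at least `2(n + 1) - 2`
edges. -/
theorem statement17 (n : ℕ) (E : Finset (Fin (n + 1) × Fin (n + 1)))
    (hloop : ∀ e ∈ E, e.1 ≠ e.2)
    (hisc : ∃ ord : Equiv.Perm (Fin (n + 1)), ord 0 = 0 ∧
      ∀ i : Fin (n + 1), InducedSC E ((Finset.Iic i).image ord)) :
    2 * (n + 1) - 2 ≤ E.card := by
  obtain ⟨ord, h0, hsc⟩ := hisc
  set S : Fin (n + 1) → Finset (Fin (n + 1)) := fun i => (Finset.Iic i).image ord with hS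
  have key : ∀ k : ℕ, ∀ hk : k ≤ n,
      2 * k ≤ (E.filter (fun e => e.1 ∈ S ⟨k, Nat.lt_succ_of_le hk⟩ ∧
        e.2 ∈ S ⟨k, Nat.lt_succ_of_le hk⟩)).card := by
    intro k
    induction k with
    | zero => intro _; exact Nat.zero_le _
    | succ k ih =>
      intro hk
      have hk' : k ≤ n := Nat.le_of_succ_le hk
      set i : Fin (n + 1) := ⟨k, Nat.lt_succ_of_le hk'⟩ with hi
      set j : Fin (n + 1) := ⟨k + 1, Nat.lt_succ_of_le hk⟩ with hj
      set v := ord j with hv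
      have hv0 : v ∈ S j := Finset.mem_image.2 ⟨j, Finset.mem_Iic.2 le_rfl, rfl⟩
      have h0S : (0 : Fin (n + 1)) ∈ S j :=
        Finset.mem_image.2 ⟨0, Finset.mem_Iic.2 (Fin.zero_le _), h0⟩
      have hvne0 : v ≠ 0 := by
        intro h
        have := ord.injective (h.trans h0.symm)
        simp [hj, Fin.ext_iff] at this
      have hout : ∃ b, (v, b) ∈ E ∧ b ∈ S j := by
        rcases Relation.ReflTransGen.cases_head (hsc j v hv0 0 h0S) with
          h | ⟨b, ⟨he, _, hb⟩, _⟩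
        · exact absurd h hvne0
        · exact ⟨b, he, hb⟩
      have hin : ∃ a, (a, v) ∈ E ∧ a ∈ S j := by
        rcases Relation.ReflTransGen.cases_tail (hsc j 0 h0S v hv0) with
          h | ⟨a, _, ⟨he, ha, _⟩⟩
        · exact absurd h hvne0
        · exact ⟨a, he, ha⟩
      obtain ⟨b, hbe, hbS⟩ := hout
      obtain ⟨a, hae, haS⟩ := hin
      have hvnotSi : v ∉ S i := by
        intro h
        rcases Finset.mem_image.1 h with ⟨x, hx, hxv⟩
        have hxj := ord.injective hxv
        subst hxj
        have := Finset.mem_Iic.1 hx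
        simp [hi, hj, Fin.le_def] at this
      have hsub : S i ⊆ S j :=
        Finset.image_subset_image (Finset.Iic_subset_Iic.2 (by simp [hi, hj, Fin.le_def]))
      set Tk := E.filter (fun e => e.1 ∈ S i ∧ e.2 ∈ S i) with hTk
      set Tk1 := E.filter (fun e => e.1 ∈ S j ∧ e.2 ∈ S j) with hTk1
      have h1 : (v, b) ∉ Tk := by
        intro h
        exact hvnotSi (Finset.mem_filter.1 h).2.1
      have h2 : (a, v) ∉ Tk := by
        intro h
        exact hvnotSi (Finset.mem_filter.1 h).2.2
      have hne : (a, v) ≠ (v, b) := by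
        intro h
        exact hloop (a, v) hae (by simpa using congrArg Prod.fst h)
      have hsubset : insert (a, v) (insert (v, b) Tk) ⊆ Tk1 := by
        intro e he
        rcases Finset.mem_insert.1 he with rfl | he
        · exact Finset.mem_filter.2 ⟨hae, haS, hv0⟩
        rcases Finset.mem_insert.1 he with rfl | he
        · exact Finset.mem_filter.2 ⟨hbe, hv0, hbS⟩
        · rcases Finset.mem_filter.1 he with ⟨heE, he1, he2⟩
          exact Finset.mem_filter.2 ⟨heE, hsub he1, hsub he2⟩
      have hcard : Tk.card + 2 ≤ Tk1.card := by
        have := Finset.card_le_card hsubset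
        rw [Finset.card_insert_of_notMem (by
              simp only [Finset.mem_insert]
              rintro (h | h)
              · exact hne h
              · exact h2 h),
            Finset.card_insert_of_notMem h1] at this
        omega
      have h2k : 2 * k ≤ Tk.card := ih hk'
      calc 2 * (k + 1) = 2 * k + 2 := by ring
        _ ≤ Tk.card + 2 := Nat.add_le_add_right h2k 2
        _ ≤ Tk1.card := hcard
  have h := key n le_rfl
  have hle : (E.filter (fun e => e.1 ∈ S ⟨n, Nat.lt_succ_of_le le_rfl⟩ ∧
      e.2 ∈ S ⟨n, Nat.lt_succ_of_le le_rfl⟩)).card ≤ E.card :=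
    Finset.card_le_card (Finset.filter_subset _ _)
  omega
end

section
/- Let n ≥ 2 and let G be a finite directed graph on vertex set {1,…,n} that is inductively strongly connected with respect to the ordering 1,2,…,n (so for every i the induced subgraph on {1,…,i} is strongly connected; in particular both 1→2 and 2→1 are edges of G). Let G′ be the directed graph on vertex set {2,…,n} obtained by collapsing vertices 1 and 2: for distinct i, j ∈ {2,…,n}, i→j is an edge of G′ if and only if i→j is an edge of G, or i = 2 and 1→j is an edge of G, or j = 2 and i→1 is an edge of G. Then G′ is inductively strongly connected with distinguished vertex 2, with respect to the ordering 2,3,…,n. -/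
/-!
Collapsing vertices `0` and `1` is the map `Fin.predAbove 0`, which sends `0` and `1` to `0`
and `j + 1` to `j`. By the edge rule of `G′` it sends every edge of `G` either to a single
vertex or to an edge of `G′`, and it maps `{0, …, i + 1}` onto `{0, …, i}`. Images of walks
are therefore walks, so strong connectivity of the segment `{0, …, i + 1}` of `G` passes to
the segment `{0, …, i}` of `G′`.
-/

theorem InducedSC.of_surjOn {m n : ℕ} {E : Finset (Fin m × Fin m)} {S : Finset (Fin m)}
    {E' : Finset (Fin n × Fin n)} {S' : Finset (Fin n)} (f : Fin m → Fin n)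
    (hmaps : Set.MapsTo f S S') (hsurj : Set.SurjOn f S S')
    (hedge : ∀ a ∈ S, ∀ b ∈ S, (a, b) ∈ E → f a ≠ f b → (f a, f b) ∈ E')
    (h : InducedSC E S) : InducedSC E' S' := by
  intro u hu v hv
  obtain ⟨a, ha, rfl⟩ := hsurj hu
  obtain ⟨b, hb, rfl⟩ := hsurj hv
  refine Relation.ReflTransGen.lift' f (fun x y ⟨hxy, hx, hy⟩ => ?_) _ _ (h a ha b hb)
  by_cases hfxy : f x = f y
  · rw [Function.onFun, hfxy]
  · exact .single ⟨hedge x hx y hy hxy hfxy, hmaps hx, hmaps hy⟩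

theorem mapsTo_predAbove_zero_Iic {n : ℕ} (i : Fin (n + 1)) :
    Set.MapsTo (Fin.predAbove 0) (Finset.Iic i.succ : Set (Fin (n + 2))) (Finset.Iic i) :=
  fun v hv => by
    simpa only [Finset.coe_Iic, Set.mem_Iic, Fin.predAbove_zero_succ] using
      Fin.predAbove_right_monotone 0 (Finset.mem_Iic.mp hv)

theorem surjOn_predAbove_zero_Iic {n : ℕ} (i : Fin (n + 1)) :
    Set.SurjOn (Fin.predAbove 0) (Finset.Iic i.succ : Set (Fin (n + 2))) (Finset.Iic i) :=
  fun u hu => ⟨u.succ, by simpa using hu, Fin.predAbove_zero_succ⟩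

theorem predAbove_zero_mem_collapse {n : ℕ} {E : Finset (Fin (n + 2) × Fin (n + 2))}
    {E' : Finset (Fin (n + 1) × Fin (n + 1))}
    (hE' : ∀ p : Fin (n + 1) × Fin (n + 1), p ∈ E' ↔ p.1 ≠ p.2 ∧
      ((p.1.succ, p.2.succ) ∈ E ∨
       (p.1 = 0 ∧ ((0 : Fin (n + 2)), p.2.succ) ∈ E) ∨
       (p.2 = 0 ∧ (p.1.succ, (0 : Fin (n + 2))) ∈ E)))
    {a b : Fin (n + 2)} (hab : (a, b) ∈ E) (hne : Fin.predAbove 0 a ≠ Fin.predAbove 0 b) :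
    (Fin.predAbove 0 a, Fin.predAbove 0 b) ∈ E' := by
  refine (hE' _).2 ⟨hne, ?_⟩
  cases a using Fin.cases <;> cases b using Fin.cases <;> simp_all

theorem statement19_general (n : ℕ) (E : Finset (Fin (n + 2) × Fin (n + 2)))
    (hisc : ∀ i : Fin (n + 2), InducedSC E (Finset.Iic i))
    (E' : Finset (Fin (n + 1) × Fin (n + 1)))
    (hE' : ∀ p : Fin (n + 1) × Fin (n + 1), p ∈ E' ↔ p.1 ≠ p.2 ∧
      ((p.1.succ, p.2.succ) ∈ E ∨
       (p.1 = 0 ∧ ((0 : Fin (n + 2)), p.2.succ) ∈ E) ∨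
       (p.2 = 0 ∧ (p.1.succ, (0 : Fin (n + 2))) ∈ E))) :
    ∀ i : Fin (n + 1), InducedSC E' (Finset.Iic i) := fun i =>
  (hisc i.succ).of_surjOn (Fin.predAbove 0) (mapsTo_predAbove_zero_Iic i)
    (surjOn_predAbove_zero_Iic i) fun _ _ _ _ hab hne => predAbove_zero_mem_collapse hE' hab hne

/-- Let `G` be a digraph on `n + 2 ≥ 2` vertices which is inductively
strongly connected with respect to the ordering `0, 1, …, n + 1` (every initial segment
`{0, …, i}` induces a strongly connected subgraph).  Let `G′` on `n + 1` vertices be the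
graph obtained by collapsing vertices `0` and `1` (vertex `j` of `G′` corresponds to
vertex `j + 1` of `G`, and the distinguished vertex `0` of `G′` is the collapsed
vertex): for `i ≠ j`, `i → j` in `G′` iff `i → j` in `G`, or `i = 0` and `0 → j` in
`G`, or `j = 0` and `i → 0` in `G`.  Then `G′` is inductively strongly connected with
respect to the ordering `0, 1, …, n`. -/
theorem statement19 (n : ℕ) (E : Finset (Fin (n + 2) × Fin (n + 2)))
    (hloop : ∀ e ∈ E, e.1 ≠ e.2)
    (hisc : ∀ i : Fin (n + 2), InducedSC E (Finset.Iic i))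
    (E' : Finset (Fin (n + 1) × Fin (n + 1)))
    (hE' : ∀ p : Fin (n + 1) × Fin (n + 1), p ∈ E' ↔ p.1 ≠ p.2 ∧
      ((p.1.succ, p.2.succ) ∈ E ∨
       (p.1 = 0 ∧ ((0 : Fin (n + 2)), p.2.succ) ∈ E) ∨
       (p.2 = 0 ∧ (p.1.succ, (0 : Fin (n + 2))) ∈ E))) :
    ∀ i : Fin (n + 1), InducedSC E' (Finset.Iic i) :=
  statement19_general n E hisc E' hE'
end
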